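/- arXiv:2404.10151 — 4 statements merged into one kernel-verified Lean document; each statement's English description precedes it below -/
import Mathlib

section
/- Replay order-independence (abstracted Lemma 'the Replay algorithm reconstructs the sublist exactly'): Let i₁, …, i_k be any enumeration of {1, …, k} that respects parents, i.e., for every m, either p (i_m) = 0 or p (i_m) ∈ {i₁, …, i_{m−1}}. Define R 0 = [0] and R m = replayInsert (p (i_m)) (i_m) (R (m−1)) for 1 ≤ m ≤ k. Then R k = L k: replaying the insertion events in any parent-respecting order, using the timestamp-guided replay insertion, reconstructs exactly the sequentially built list. -/
/-- Insert `x` immediately after the (first) occurrence of `a` in the list. -/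
def insertAfter (a x : ℕ) : List ℕ → List ℕ
  | [] => []
  | b :: t => if b = a then b :: x :: t else b :: insertAfter a x t

/-- The sequential construction: `L 0 = [0]`, `L (i+1) = insertAfter (p (i+1)) (i+1) (L i)`. -/
def buildL (p : ℕ → ℕ) : ℕ → List ℕ
  | 0 => [0]
  | i + 1 => insertAfter (p (i + 1)) (i + 1) (buildL p i)

/-- Insert `x` into a list by timestamp: skip all elements greater than `x`,
and insert `x` before the first element smaller (or equal), or at the end. -/
def insertByTS (x : ℕ) : List ℕ → List ℕ
  | [] => [x]
  | b :: t => if x < b then b :: insertByTS x t else x :: b :: t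

/-- The timestamp-guided replay insertion: scan right from the occurrence of `a`,
skip all elements with timestamp greater than `x`, and insert `x` before the
first element with smaller timestamp (or at the end). -/
def replayInsert (a x : ℕ) : List ℕ → List ℕ
  | [] => []
  | b :: t => if b = a then b :: insertByTS x t else b :: replayInsert a x t

/-- `buildSet p S` performs the insertion events of `S` in increasing order of
timestamp, starting from `[0]`. -/
def buildSet (p : ℕ → ℕ) (S : Finset ℕ) : List ℕ :=
  (S.sort (· ≤ ·)).foldl (fun M i => insertAfter (p i) i M) [0]

/-- `i` is an ancestor of `j` (equivalently `j` a descendant of `i`): iterating the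
parent map `p` (extended by `p 0 = 0`) starting from `j` reaches `i`. -/
def isAncestor (p : ℕ → ℕ) (i j : ℕ) : Prop :=
  ∃ n : ℕ, (fun m => if m = 0 then 0 else p m)^[n] j = i



/-!
The sequential list `L = buildL p k` satisfies `ParentBetween p L`: whenever a smaller timestamp
`x` occurs before `y`, the parent of `y` occurs in the stretch from `x` up to `y`. This survives
each `insertAfter` step because the inserted element is the largest so far. Consequently, in `L`
everything strictly between `p x` and `x` is larger than `x`, and the first element after `x`
of a parent-closed set `S` is smaller than `x`, since otherwise its parent would lie between `x`
and it. So replaying `x` into the sublist of `L` on a parent-closed `S ∌ x` with `p x ∈ S` gives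
exactly the sublist on `insert x S`; a parent-respecting order keeps the replayed set
parent-closed, and induction along it reaches all of `L`.
-/

lemma insertAfter_append_cons {a : ℕ} (x : ℕ) {u : List ℕ} (v : List ℕ) (h : a ∉ u) :
    insertAfter a x (u ++ a :: v) = u ++ a :: x :: v := by
  induction u with
  | nil => simp [insertAfter]
  | cons b u ih =>
    simp only [List.mem_cons, not_or] at h
    simp [insertAfter, Ne.symm h.1, ih h.2]

lemma exists_insertAfter_eq {a : ℕ} (x : ℕ) {M : List ℕ} (h : a ∈ M) :
    ∃ u v, a ∉ u ∧ M = u ++ a :: v ∧ insertAfter a x M = u ++ a :: x :: v := by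
  obtain ⟨u, v, hu, rfl, -⟩ := List.exists_erase_eq h
  exact ⟨u, v, hu, rfl, insertAfter_append_cons x v hu⟩

lemma exists_insertAfter_eq_cons (a x b : ℕ) (t : List ℕ) :
    ∃ t', insertAfter a x (b :: t) = b :: t' := by
  unfold insertAfter
  split_ifs
  exacts [⟨_, rfl⟩, ⟨_, rfl⟩]

lemma insertAfter_perm {a : ℕ} (x : ℕ) {M : List ℕ} (h : a ∈ M) :
    (insertAfter a x M).Perm (x :: M) := by
  obtain ⟨u, v, -, rfl, hins⟩ := exists_insertAfter_eq x h
  rw [hins]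
  simpa using List.perm_middle (l₁ := u ++ [a]) (a := x) (l₂ := v)

lemma replayInsert_append_cons {a : ℕ} (x : ℕ) {u : List ℕ} (v : List ℕ) (h : a ∉ u) :
    replayInsert a x (u ++ a :: v) = u ++ a :: insertByTS x v := by
  induction u with
  | nil => simp [replayInsert]
  | cons b u ih =>
    simp only [List.mem_cons, not_or] at h
    simp [replayInsert, Ne.symm h.1, ih h.2]

lemma insertByTS_append {x : ℕ} {l₁ l₂ : List ℕ} (h₁ : ∀ b ∈ l₁, x < b)
    (h₂ : ∀ z ∈ l₂.head?, ¬ x < z) : insertByTS x (l₁ ++ l₂) = l₁ ++ x :: l₂ := by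
  induction l₁ with
  | nil =>
    cases l₂ with
    | nil => rfl
    | cons z t => simp [insertByTS, h₂ z rfl]
  | cons b l₁ ih =>
    simp only [List.mem_cons, forall_eq_or_imp] at h₁
    simp [insertByTS, h₁.1, ih h₁.2]

def ParentBetween (p : ℕ → ℕ) (L : List ℕ) : Prop :=
  ∀ ⦃U W V : List ℕ⦄ ⦃x y : ℕ⦄, L = U ++ x :: (W ++ y :: V) → x < y → p y ∈ x :: W

lemma mem_of_append_singleton_eq {α : Type*} {a u : α} {M U W : List α}
    (h : M ++ [a] = U ++ u :: W) :
    a ∈ u :: W := by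
  rcases List.append_eq_append_iff.1 h with ⟨c, -, hc⟩ | ⟨c, -, hc⟩
  · cases c <;> simp_all
  · simp [hc]

lemma ParentBetween.insertAfter {p : ℕ → ℕ} {M : List ℕ} {x : ℕ} (hM : ParentBetween p M)
    (hlt : ∀ y ∈ M, y < x) (hpx : p x ∈ M) :
    ParentBetween p (insertAfter (p x) x M) := by
  obtain ⟨M₁, M₂, -, rfl, hins⟩ := exists_insertAfter_eq x hpx
  have hxM : x ∉ M₁ ++ p x :: M₂ := fun h => (hlt x h).false
  rw [hins]
  intro U W V u v hsplit huv
  by_cases hv : v = x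
  · subst hv
    have hsplit' : (M₁ ++ [p v]) ++ v :: M₂ = (U ++ u :: W) ++ v :: V := by simpa using hsplit
    obtain ⟨hprefix, -⟩ := (List.append_cons_inj_of_notMem (by simp_all) (by simp_all)).1 hsplit'
    exact mem_of_append_singleton_eq hprefix
  by_cases hu : u = x
  · subst hu
    have hvM : v ∈ M₁ ++ p u :: M₂ := by
      have : v ∈ M₁ ++ p u :: u :: M₂ := by simp [hsplit]
      simp only [List.mem_append, List.mem_cons] at this ⊢
      tauto
    exact absurd (hlt v hvM) (by omega)
  have hkeep : ∀ l : List ℕ, x ∉ l → l.filter (· ≠ x) = l := fun l hl =>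
    List.filter_eq_self.2 fun a ha => by simpa using ne_of_mem_of_not_mem ha hl
  have hpx : p x ≠ x := fun h => hxM (by simp [h])
  have hfilter := congrArg (List.filter (· ≠ x)) hsplit
  simp only [List.filter_append, List.filter_cons, hkeep M₁ (by simp_all),
    hkeep M₂ (by simp_all)] at hfilter
  simp [hu, hv, hpx] at hfilter
  exact (List.filter_sublist.cons_cons u).subset (hM hfilter huv)

lemma exists_buildL_eq_zero_cons (p : ℕ → ℕ) (i : ℕ) : ∃ T, buildL p i = 0 :: T := by
  induction i with
  | zero => exact ⟨[], rfl⟩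
  | succ i ih =>
    obtain ⟨T, hT⟩ := ih
    rw [buildL, hT]
    exact exists_insertAfter_eq_cons _ _ _ _

section buildL

variable {k : ℕ} {p : ℕ → ℕ}

lemma buildL_perm_range (hp : ∀ i, 1 ≤ i → i ≤ k → p i < i) {i : ℕ} (hi : i ≤ k) :
    (buildL p i).Perm (List.range (i + 1)) := by
  induction i with
  | zero => rfl
  | succ i ih =>
    have ih := ih (by omega)
    have hpar : p (i + 1) ∈ buildL p i := by
      rw [ih.mem_iff, List.mem_range]
      have := hp (i + 1) (by omega) hi
      omega
    rw [List.range_succ]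
    exact (insertAfter_perm _ hpar).trans ((ih.cons _).trans (List.perm_append_singleton _ _).symm)

lemma parentBetween_buildL (hp : ∀ i, 1 ≤ i → i ≤ k → p i < i) {i : ℕ} (hi : i ≤ k) :
    ParentBetween p (buildL p i) := by
  induction i with
  | zero =>
    intro U W V x y h
    have := congrArg List.length h
    simp [buildL] at this
    omega
  | succ i ih =>
    have hperm := buildL_perm_range hp (i := i) (by omega)
    refine (ih (by omega)).insertAfter (fun y hy => ?_) ?_
    · simpa using hperm.subset hy
    · rw [hperm.mem_iff, List.mem_range]
      have := hp (i + 1) (by omega) hi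
      omega

end buildL

section replay

variable {p : ℕ → ℕ} {T : List ℕ}

lemma ParentBetween.exists_split_parent (hpb : ParentBetween p (0 :: T)) (hnd : (0 :: T).Nodup)
    {x : ℕ} (hx : x ∈ T) :
    ∃ A B C, 0 :: T = A ++ p x :: (B ++ x :: C) ∧ ∀ b ∈ B, x < b := by
  obtain ⟨T₁, T₂, rfl⟩ := List.append_of_mem hx
  have hx0 : 0 < x := Nat.pos_of_ne_zero fun h => (List.nodup_cons.1 hnd).1 (h ▸ hx)
  obtain ⟨A, B, hAB⟩ := List.append_of_mem (hpb (U := []) rfl hx0)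
  have hsplit : 0 :: (T₁ ++ x :: T₂) = A ++ p x :: (B ++ x :: T₂) := by
    rw [← List.cons_append, hAB]; simp
  refine ⟨A, B, T₂, hsplit, fun b hb => ?_⟩
  obtain ⟨B₁, B₂, rfl⟩ := List.append_of_mem hb
  have hrest := List.nodup_cons.1 (hsplit ▸ hnd).of_append_right
  have hbx : b ≠ x := by rintro rfl; simp [List.nodup_append] at hrest
  by_contra hxb
  have hpx : p x ∈ b :: B₂ :=
    hpb (U := A ++ p x :: B₁) (W := B₂) (V := T₂) (by rw [hsplit]; simp) (by omega)
  exact hrest.1 (by simp_all)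

lemma replayInsert_filter_eq_filter_insert (hpb : ParentBetween p (0 :: T)) (hnd : (0 :: T).Nodup)
    {S : Finset ℕ} (hS : ∀ y ∈ S, y ≠ 0 → p y ∈ S) {x : ℕ} (hxT : x ∈ T) (hxS : x ∉ S)
    (hpx : p x ∈ S) :
    replayInsert (p x) x ((0 :: T).filter (· ∈ S)) = (0 :: T).filter (· ∈ insert x S) := by
  obtain ⟨A, B, C, hsplit, hB⟩ := hpb.exists_split_parent hnd hxT
  rw [hsplit] at hpb hnd ⊢
  have hdisj := List.disjoint_of_nodup_append hnd
  have hpxA : p x ∉ A := fun h => hdisj h List.mem_cons_self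
  have hxA : x ∉ A := fun h => hdisj h (by simp)
  have hxBC : x ∉ B ++ C :=
    (List.nodup_cons.1 (List.nodup_middle.1 (List.nodup_cons.1 hnd.of_append_right).2)).1
  have hkeep : ∀ l : List ℕ, x ∉ l → l.filter (· ∈ insert x S) = l.filter (· ∈ S) :=
    fun l hl => List.filter_congr fun a ha => by simp [ne_of_mem_of_not_mem ha hl]
  simp only [List.filter_append, List.filter_cons, hkeep A hxA,
    hkeep B fun h => hxBC (List.mem_append_left C h),
    hkeep C fun h => hxBC (List.mem_append_right B h),
    Finset.mem_insert_self, Finset.mem_insert_of_mem hpx, hpx, hxS, decide_true,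
    decide_false, Bool.false_eq_true, if_true, if_false]
  rw [replayInsert_append_cons _ _ (fun h => hpxA (List.mem_of_mem_filter h)),
    insertByTS_append (fun b hb => hB b (List.mem_of_mem_filter hb))]
  intro z hz hxz
  obtain ⟨r, hr⟩ := List.head?_eq_some_iff.1 (Option.mem_def.1 hz)
  obtain ⟨C₁, C₂, rfl, hC₁, hzS, -⟩ := List.filter_eq_cons_iff.1 hr
  have hpz : p z ∈ x :: C₁ :=
    hpb (U := A ++ p x :: B) (V := C₂) (by simp) hxz
  have hpzS : p z ∈ S := hS z (by simpa using hzS) (by omega)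
  rcases List.mem_cons.1 hpz with h | h
  · exact hxS (h ▸ hpzS)
  · simpa [hpzS] using hC₁ _ h

theorem foldl_replayInsert_filter (hpb : ParentBetween p (0 :: T)) (hnd : (0 :: T).Nodup) :
    ∀ (l : List ℕ) (S : Finset ℕ), (∀ y ∈ S, y ≠ 0 → p y ∈ S) → l.Nodup →
      (∀ x ∈ l, x ∈ T ∧ x ∉ S) →
      (∀ (m : ℕ) (hm : m < l.length), p (l[m]'hm) ∈ S ∨ p (l[m]'hm) ∈ l.take m) →
      l.foldl (fun M i => replayInsert (p i) i M) ((0 :: T).filter (· ∈ S)) =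
        (0 :: T).filter (· ∈ S ∪ l.toFinset)
  | [], S, _, _, _, _ => by simp
  | x :: l, S, hS, hl, hlT, hlp => by
    obtain ⟨hxl, hl⟩ := List.nodup_cons.1 hl
    have hpx : p x ∈ S := by
      have h := hlp 0 (by simp)
      rwa [List.getElem_cons_zero, List.take_zero, List.mem_nil_iff, or_false] at h
    rw [List.foldl_cons, replayInsert_filter_eq_filter_insert hpb hnd hS (hlT x (by simp)).1
      (hlT x (by simp)).2 hpx,
      foldl_replayInsert_filter hpb hnd l (insert x S) ?closed hl ?fresh ?parent]
    · congr 2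
      ext y
      simp
    case closed =>
      intro y hy hy0
      rcases Finset.mem_insert.1 hy with rfl | hy
      · exact Finset.mem_insert_of_mem hpx
      · exact Finset.mem_insert_of_mem (hS y hy hy0)
    case fresh =>
      intro y hy
      refine ⟨(hlT y (by simp [hy])).1, ?_⟩
      simp only [Finset.mem_insert, not_or]
      exact ⟨ne_of_mem_of_not_mem hy hxl, (hlT y (by simp [hy])).2⟩
    case parent =>
      intro m hm
      have h := hlp (m + 1) (by simpa using hm)
      rw [List.getElem_cons_succ] at h
      simpa [or_assoc, or_left_comm] using h

end replay

/-- Replay order-independence: replaying the insertion events in any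
parent-respecting order, using the timestamp-guided replay insertion,
reconstructs exactly the sequentially built list. -/
theorem replay_order_independence
    (k : ℕ) (p : ℕ → ℕ) (hp : ∀ i, 1 ≤ i → i ≤ k → p i < i)
    (e : List ℕ) (he : e.Perm (List.range' 1 k))
    (hpar : ∀ (m : ℕ) (hm : m < e.length),
      p (e[m]'hm) = 0 ∨ p (e[m]'hm) ∈ e.take m) :
    e.foldl (fun M i => replayInsert (p i) i M) [0] = buildL p k := by
  obtain ⟨T, hT⟩ := exists_buildL_eq_zero_cons p k
  have hperm : (0 :: T).Perm (0 :: List.range' 1 k) := by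
    rw [← hT]; simpa [List.range_eq_range', List.range'_succ] using buildL_perm_range hp le_rfl
  have hnd : (0 :: T).Nodup := hperm.nodup_iff.2 (by simp [List.nodup_range'])
  have hTe : T.Perm e := (List.perm_cons 0).1 hperm |>.trans he.symm
  have h0T : 0 ∉ T := (List.nodup_cons.1 hnd).1
  have hstart : (0 :: T).filter (· ∈ ({0} : Finset ℕ)) = [0] := by
    simpa using fun y hy => ne_of_mem_of_not_mem hy h0T
  rw [hT, ← hstart, foldl_replayInsert_filter (hT ▸ parentBetween_buildL hp le_rfl) hnd e {0}
    (by simp) (hTe.nodup_iff.1 hnd.of_cons)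
    (fun x hx => ⟨hTe.mem_iff.2 hx, by simpa using ne_of_mem_of_not_mem (hTe.mem_iff.2 hx) h0T⟩)
    (by simpa using hpar)]
  exact List.filter_eq_self.2 fun y hy => by simpa [← hTe.mem_iff] using hy
end

section
/- Parent-closed restriction lemma: Let S ⊆ {1, …, k} be parent-closed. Then the sublist of L k obtained by keeping only the entry 0 and the entries belonging to S (i.e., filtering L k by membership in S ∪ {0}, preserving order) equals build S. In other words, the elements of a parent-closed set of insertion events appear in L k in exactly the relative order they would have if only those events had been performed. -/
/-!
Induct on `k`. Filtering by a set containing the new element `k + 1` and its parent commutes with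
`insertAfter (p (k + 1)) (k + 1)`, because the first occurrence of the parent survives the filter;
filtering by a set not containing `k + 1` simply ignores that insertion. On the other side, `k + 1`
is the largest event of `S`, so `build S` performs it last.
-/

theorem insertAfter_subset_cons (a x : ℕ) (M : List ℕ) : insertAfter a x M ⊆ x :: M := by
  induction M with
  | nil => simp [insertAfter]
  | cons b t ih =>
    unfold insertAfter
    split_ifs <;> grind

theorem filter_insertAfter_of_false {pr : ℕ → Bool} (a : ℕ) {x : ℕ} (hx : pr x = false)
    (M : List ℕ) : (insertAfter a x M).filter pr = M.filter pr := by
  induction M with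
  | nil => rfl
  | cons b t ih =>
    unfold insertAfter
    split_ifs <;> simp [List.filter_cons, hx, ih]

theorem filter_insertAfter_of_true {pr : ℕ → Bool} {a x : ℕ} (ha : pr a) (hx : pr x)
    (M : List ℕ) : (insertAfter a x M).filter pr = insertAfter a x (M.filter pr) := by
  induction M with
  | nil => rfl
  | cons b t ih =>
    by_cases hb : b = a
    · subst hb
      simp [insertAfter, ha, hx]
    · cases hbp : pr b <;> simp [insertAfter, hb, hbp, ih]

theorem le_of_mem_buildL {p : ℕ → ℕ} {n x : ℕ} (h : x ∈ buildL p n) : x ≤ n := by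
  induction n generalizing x with
  | zero => simpa [buildL] using h
  | succ n ih =>
    rcases List.mem_cons.1 (insertAfter_subset_cons _ _ _ h) with rfl | h
    · rfl
    · exact (ih h).trans n.le_succ

theorem sort_insert_of_forall_lt {α : Type*} [LinearOrder α] {S : Finset α} {m : α} (hm : ∀ i ∈ S, i < m) :
    (insert m S).sort (· ≤ ·) = S.sort (· ≤ ·) ++ [m] := by
  have hnodup : (S.sort (· ≤ ·) ++ [m]).Nodup :=
    List.nodup_append.2 ⟨S.sort_nodup _, List.nodup_singleton m,
      fun i hi j hj => (List.mem_singleton.1 hj).symm ▸ (hm i ((S.mem_sort _).1 hi)).ne⟩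
  have hpair : (S.sort (· ≤ ·) ++ [m]).Pairwise (· ≤ ·) :=
    List.pairwise_append.2 ⟨S.pairwise_sort _, by simp,
      fun i hi j hj => (List.mem_singleton.1 hj).symm ▸ (hm i ((S.mem_sort _).1 hi)).le⟩
  have hset : (S.sort (· ≤ ·) ++ [m]).toFinset = insert m S := by
    ext i
    simp
  rw [← hset]
  exact (List.toFinset_sort _ hnodup).2 hpair

theorem buildSet_insert_of_forall_lt (p : ℕ → ℕ) {S : Finset ℕ} {m : ℕ} (hm : ∀ i ∈ S, i < m) :
    buildSet p (insert m S) = insertAfter (p m) m (buildSet p S) := by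
  rw [buildSet, sort_insert_of_forall_lt hm, List.foldl_append]
  rfl

theorem filter_buildL_erase_of_lt (p : ℕ → ℕ) {n m : ℕ} (hnm : n < m) (S : Finset ℕ) :
    (buildL p n).filter (fun x => x = 0 || decide (x ∈ S.erase m)) =
      (buildL p n).filter (fun x => x = 0 || decide (x ∈ S)) :=
  List.filter_congr fun x hx => by
    have hxm : x ≠ m := ((le_of_mem_buildL hx).trans_lt hnm).ne
    simp [hxm]

def ParentClosed (p : ℕ → ℕ) (S : Finset ℕ) : Prop :=
  ∀ i ∈ S, p i = 0 ∨ p i ∈ S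

theorem ParentClosed.erase {p : ℕ → ℕ} {S : Finset ℕ} {m : ℕ} (hS : ParentClosed p S)
    (hm : ∀ i ∈ S, p i ≠ m) : ParentClosed p (S.erase m) := fun i hi =>
  (hS i (Finset.mem_of_mem_erase hi)).imp_right
    (Finset.mem_erase_of_ne_of_mem (hm i (Finset.mem_of_mem_erase hi)))

/-- Parent-closed restriction lemma: filtering the final list `L k` to the
entry `0` and the entries of a parent-closed set `S` yields exactly `build S`. -/
theorem parent_closed_restriction
    (k : ℕ) (p : ℕ → ℕ) (hp : ∀ i, 1 ≤ i → i ≤ k → p i < i)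
    (S : Finset ℕ) (hS : S ⊆ Finset.Icc 1 k)
    (hclosed : ∀ i ∈ S, p i = 0 ∨ p i ∈ S) :
    (buildL p k).filter (fun x => x = 0 || decide (x ∈ S)) = buildSet p S := by
  induction k generalizing S with
  | zero =>
    obtain rfl : S = ∅ := Finset.subset_empty.1 (by simpa using hS)
    simp [buildL, buildSet]
  | succ k ih =>
    have hS' : S.erase (k + 1) ⊆ Finset.Icc 1 k := fun i hi => by
      have := hS (Finset.mem_of_mem_erase hi)
      have := Finset.ne_of_mem_erase hi
      simp only [Finset.mem_Icc] at *
      omega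
    have hp_ne : ∀ i ∈ S, p i ≠ k + 1 := fun i hi => by
      have hi' := Finset.mem_Icc.1 (hS hi)
      exact (hp i hi'.1 hi'.2).trans_le hi'.2 |>.ne
    have hrec := ih (fun i h1 h2 => hp i h1 (by omega)) _ hS' (ParentClosed.erase hclosed hp_ne)
    rw [filter_buildL_erase_of_lt p k.lt_succ_self] at hrec
    change List.filter _ (insertAfter (p (k + 1)) (k + 1) (buildL p k)) = _
    by_cases hk : k + 1 ∈ S
    · have hlt : ∀ i ∈ S.erase (k + 1), i < k + 1 :=
        fun i hi => Nat.lt_succ_of_le (Finset.mem_Icc.1 (hS' hi)).2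
      conv_rhs => rw [← Finset.insert_erase hk, buildSet_insert_of_forall_lt p hlt, ← hrec]
      refine filter_insertAfter_of_true ?_ (by simp [hk]) _
      rcases hclosed (k + 1) hk with h | h <;> simp [h]
    · rw [filter_insertAfter_of_false _ (by simp [hk]), hrec, Finset.erase_eq_of_notMem hk]
end

section
/- Segment invariant: In the final list L k, for every i ∈ {1, …, k}, every element lying strictly between p i (the parent of i) and i in the list order of L k is greater than i. That is, all elements separating a node from its insertion parent in the final list have strictly larger timestamps than the node itself. -/
def ForallBetween {α : Type*} (P : α → Prop) (a c : α) (L : List α) : Prop :=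
  ∃ u v w : List α, L = u ++ a :: v ++ c :: w ∧ ∀ b ∈ v, P b

theorem ForallBetween.insert {α : Type*} {P : α → Prop} {a c x : α} {L₁ L₂ : List α}
    (h : ForallBetween P a c (L₁ ++ L₂)) (hx : P x) : ForallBetween P a c (L₁ ++ x :: L₂) := by
  obtain ⟨u, v, w, huvw, hv⟩ := h
  rcases List.append_eq_append_iff.1 huvw with ⟨s, hs, rfl⟩ | ⟨s, rfl, hs⟩
  · rcases List.append_eq_append_iff.1 hs with ⟨t, rfl, ht⟩ | ⟨t, rfl, rfl⟩
    · rcases List.cons_eq_append_iff.1 ht with ⟨rfl, rfl⟩ | ⟨t, rfl, rfl⟩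
      · exact ⟨u ++ [x], v, w, by simp, hv⟩
      · refine ⟨u, t ++ x :: s, w, by simp, ?_⟩
        simp only [List.mem_append, List.mem_cons] at hv ⊢
        rintro b (hb | rfl | hb)
        exacts [hv b (.inl hb), hx, hv b (.inr hb)]
    · exact ⟨L₁ ++ x :: t, v, w, by simp, hv⟩
  · rcases List.cons_eq_append_iff.1 hs with ⟨rfl, rfl⟩ | ⟨s, rfl, rfl⟩
    · refine ⟨u, v ++ [x], w, by simp, ?_⟩
      simp only [List.mem_append, List.mem_singleton]
      rintro b (hb | rfl)
      exacts [hv b hb, hx]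
    · exact ⟨u, v, s ++ x :: L₂, by simp, hv⟩

theorem insertAfter_eq_of_mem {a : ℕ} (x : ℕ) {M : List ℕ} (ha : a ∈ M) :
    ∃ M₁ M₂ : List ℕ, M = M₁ ++ a :: M₂ ∧ insertAfter a x M = M₁ ++ a :: x :: M₂ := by
  induction M with
  | nil => simp at ha
  | cons b t ih =>
    by_cases hb : b = a
    · subst hb
      exact ⟨[], t, rfl, by simp [insertAfter]⟩
    · obtain ⟨M₁, M₂, rfl, hins⟩ := ih ((List.mem_cons.1 ha).resolve_left (Ne.symm hb))
      exact ⟨b :: M₁, M₂, rfl, by simp [insertAfter, hb, hins]⟩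

theorem mem_buildL {p : ℕ → ℕ} {n : ℕ} (hp : ∀ j, 1 ≤ j → j ≤ n → p j < j) {m : ℕ}
    (hm : m ≤ n) : m ∈ buildL p n := by
  induction n generalizing m with
  | zero => simp [buildL, Nat.le_zero.1 hm]
  | succ n ih =>
    have ih' : ∀ {m}, m ≤ n → m ∈ buildL p n := ih fun j hj hjn => hp j hj (by omega)
    have hpn : p (n + 1) ≤ n := Nat.le_of_lt_succ (hp (n + 1) n.succ_pos le_rfl)
    obtain ⟨M₁, M₂, hM, hins⟩ := insertAfter_eq_of_mem (n + 1) (ih' hpn)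
    show m ∈ insertAfter (p (n + 1)) (n + 1) (buildL p n)
    rcases Nat.lt_or_eq_of_le hm with hm | rfl
    · have := ih' (Nat.le_of_lt_succ hm)
      rw [hM] at this
      rw [hins]
      simp only [List.mem_append, List.mem_cons] at this ⊢
      tauto
    · simp [hins]

/-- Once `i` has been inserted right after `p i`, every later insertion has a larger timestamp,
so whatever lands between them is larger than `i`. -/
theorem forallBetween_buildL {p : ℕ → ℕ} {i n : ℕ} (hp : ∀ j, 1 ≤ j → j ≤ n → p j < j)
    (hi : 1 ≤ i) (hin : i ≤ n) : ForallBetween (i < ·) (p i) i (buildL p n) := by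
  induction n, hin using Nat.le_induction with
  | base =>
    obtain ⟨m, rfl⟩ := Nat.exists_eq_add_of_le' hi
    have hpm : p (m + 1) ∈ buildL p m :=
      mem_buildL (fun j hj hjm => hp j hj (by omega)) (Nat.le_of_lt_succ (hp _ hi le_rfl))
    obtain ⟨M₁, M₂, -, hins⟩ := insertAfter_eq_of_mem (m + 1) hpm
    exact ⟨M₁, [], M₂, by simpa [buildL] using hins, by simp⟩
  | succ n hin ih =>
    have hpn : p (n + 1) ≤ n := Nat.le_of_lt_succ (hp (n + 1) (by omega) le_rfl)
    have hp' : ∀ j, 1 ≤ j → j ≤ n → p j < j := fun j hj hjn => hp j hj (by omega)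
    obtain ⟨M₁, M₂, hM, hins⟩ := insertAfter_eq_of_mem (n + 1) (mem_buildL hp' hpn)
    have hsplit : buildL p n = (M₁ ++ [p (n + 1)]) ++ M₂ := by simp [hM]
    have hnext : buildL p (n + 1) = (M₁ ++ [p (n + 1)]) ++ (n + 1) :: M₂ := by
      simpa [buildL] using hins
    rw [hnext]
    exact (hsplit ▸ ih hp').insert (by omega)

/-- Segment invariant: in the final list `L k`, every element lying strictly
between `p i` and `i` is greater than `i`. -/
theorem segment_invariant
    (k : ℕ) (p : ℕ → ℕ) (hp : ∀ i, 1 ≤ i → i ≤ k → p i < i)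
    (i : ℕ) (h1 : 1 ≤ i) (h2 : i ≤ k) :
    ∃ u v w : List ℕ, buildL p k = u ++ p i :: v ++ i :: w ∧ ∀ b ∈ v, i < b :=
  forallBetween_buildL hp h1 h2
end

section
/- Preorder-traversal characterization of the built list: Regard the parent map p as defining a rooted tree on {0, 1, …, k} with root 0 (the parent of node i being p i). Then the final list L k equals the depth-first preorder traversal of this tree in which the children of each node are visited in decreasing order of timestamp. In particular, each node of the tree is followed in L k by a contiguous block consisting exactly of its proper descendants. -/
/-- Depth-first preorder traversal of the parent tree on `{0, 1, …, k}` rooted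
at `0`, visiting the children of each node in decreasing order of timestamp
(`fuel` bounds the recursion depth; depth is at most `k`). -/
def preorderAux (p : ℕ → ℕ) (k : ℕ) : ℕ → ℕ → List ℕ
  | 0, n => [n]
  | fuel + 1, n =>
      n :: (((List.range (k + 1)).filter
            (fun i => decide (1 ≤ i) && decide (p i = n))).reverse).flatMap
          (fun c => preorderAux p k fuel c)

/-!
The traversal `subtree p k n` below `n` is `n` followed by the subtrees of the
children of `n`, newest first. Adding node `k + 1` changes the traversal only by inserting
`k + 1` right after its parent: as the newest child it is visited first, and the parent occurs
in exactly one child subtree of each of its ancestors, because ancestors of a node form a chain.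
So `buildL p k` and `subtree p k 0` obey the same recursion. The subtree of any node is then a
contiguous block of the traversal from the root, and it consists of the descendants of the node.
-/

def IsParentMap (p : ℕ → ℕ) (k : ℕ) : Prop :=
  ∀ i, 1 ≤ i → i ≤ k → p i < i

theorem IsParentMap.mono {p : ℕ → ℕ} {k : ℕ} (hp : IsParentMap p (k + 1)) : IsParentMap p k :=
  fun i h1 h2 => hp i h1 (by omega)

section InsertAfter

variable {a x : ℕ}

theorem insertAfter_of_not_mem {l : List ℕ} (h : a ∉ l) : insertAfter a x l = l := by
  induction l with
  | nil => rfl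
  | cons b t ih =>
    rw [List.mem_cons, not_or] at h
    simp only [insertAfter, if_neg (Ne.symm h.1), ih h.2]

theorem insertAfter_append_of_not_mem_left {l₁ : List ℕ} (l₂ : List ℕ) (h : a ∉ l₁) :
    insertAfter a x (l₁ ++ l₂) = l₁ ++ insertAfter a x l₂ := by
  induction l₁ with
  | nil => rfl
  | cons b t ih =>
    rw [List.mem_cons, not_or] at h
    simp only [List.cons_append, insertAfter, if_neg (Ne.symm h.1), ih h.2]

theorem insertAfter_append_of_not_mem_right (l₁ : List ℕ) {l₂ : List ℕ} (h : a ∉ l₂) :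
    insertAfter a x (l₁ ++ l₂) = insertAfter a x l₁ ++ l₂ := by
  induction l₁ with
  | nil => exact insertAfter_of_not_mem h
  | cons b t ih =>
    by_cases hb : b = a
    · simp only [List.cons_append, insertAfter, if_pos hb]
    · simp only [List.cons_append, insertAfter, if_neg hb, ih]

theorem insertAfter_flatMap {ι : Type*} {l : List ι} {g : ι → List ℕ}
    (h : l.Pairwise fun c c' => a ∉ g c ∨ a ∉ g c') :
    insertAfter a x (l.flatMap g) = l.flatMap fun c => insertAfter a x (g c) := by
  induction l with
  | nil => rfl
  | cons c t ih =>
    rw [List.pairwise_cons] at h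
    rw [List.flatMap_cons, List.flatMap_cons]
    by_cases hc : a ∈ g c
    · have htail : ∀ c' ∈ t, a ∉ g c' := fun c' hc' => (h.1 c' hc').resolve_left (not_not.2 hc)
      rw [insertAfter_append_of_not_mem_right _ (by simpa using htail),
        List.flatMap_congr fun c' hc' => insertAfter_of_not_mem (htail c' hc')]
    · rw [insertAfter_append_of_not_mem_left _ hc, insertAfter_of_not_mem hc, ih h.2]

end InsertAfter

section Ancestor

variable {p : ℕ → ℕ} {k : ℕ}

theorem isAncestor_refl (n : ℕ) : isAncestor p n n := ⟨0, rfl⟩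

theorem isAncestor.trans {i j l : ℕ} (hij : isAncestor p i j) (hjl : isAncestor p j l) :
    isAncestor p i l := by
  obtain ⟨s, hs⟩ := hij
  obtain ⟨t, ht⟩ := hjl
  exact ⟨s + t, by rw [Function.iterate_add_apply, ht, hs]⟩

theorem isAncestor_zero_right_iff {i : ℕ} : isAncestor p i 0 ↔ i = 0 := by
  constructor
  · rintro ⟨r, hr⟩
    rw [← hr]
    exact Function.iterate_fixed (by simp) r
  · rintro rfl
    exact isAncestor_refl 0

theorem isAncestor_iff_eq_or_parent {i j : ℕ} (hj : j ≠ 0) :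
    isAncestor p i j ↔ i = j ∨ isAncestor p i (p j) := by
  constructor
  · rintro ⟨_ | r, hr⟩
    · exact Or.inl hr.symm
    · rw [Function.iterate_succ_apply, if_neg hj] at hr
      exact Or.inr ⟨r, hr⟩
  · rintro (rfl | ⟨r, hr⟩)
    · exact isAncestor_refl i
    · exact ⟨r + 1, by rw [Function.iterate_succ_apply, if_neg hj, hr]⟩

theorem isAncestor_total {i i' j : ℕ} (hi : isAncestor p i j) (hi' : isAncestor p i' j) :
    isAncestor p i i' ∨ isAncestor p i' i := by
  obtain ⟨s, rfl⟩ := hi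
  obtain ⟨t, rfl⟩ := hi'
  rcases le_total s t with h | h
  · obtain ⟨d, rfl⟩ := Nat.exists_eq_add_of_le h
    exact Or.inr ⟨d, by rw [add_comm, Function.iterate_add_apply]⟩
  · obtain ⟨d, rfl⟩ := Nat.exists_eq_add_of_le h
    exact Or.inl ⟨d, by rw [add_comm, Function.iterate_add_apply]⟩

theorem isAncestor.le (hp : IsParentMap p k) {i j : ℕ} (hj : j ≤ k) (h : isAncestor p i j) :
    i ≤ j := by
  induction j using Nat.strong_induction_on with
  | _ j ih =>
    rcases eq_or_ne j 0 with rfl | hj0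
    · exact (isAncestor_zero_right_iff.1 h).le
    · rcases (isAncestor_iff_eq_or_parent hj0).1 h with rfl | h
      · exact le_rfl
      · have hpj := hp j (by omega) hj
        exact (ih (p j) hpj (by omega) h).trans hpj.le

theorem isAncestor_zero (hp : IsParentMap p k) {n : ℕ} (hn : n ≤ k) : isAncestor p 0 n := by
  induction n using Nat.strong_induction_on with
  | _ n ih =>
    rcases eq_or_ne n 0 with rfl | hn0
    · exact isAncestor_refl 0
    · have hpn := hp n (by omega) hn
      exact (isAncestor_iff_eq_or_parent hn0).2 (Or.inr (ih (p n) hpn (by omega)))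

end Ancestor

section Traversal

variable {p : ℕ → ℕ} {k : ℕ}

def children (p : ℕ → ℕ) (k n : ℕ) : List ℕ :=
  ((List.range (k + 1)).filter fun i => decide (1 ≤ i) && decide (p i = n)).reverse

theorem mem_children {n c : ℕ} : c ∈ children p k n ↔ 1 ≤ c ∧ c ≤ k ∧ p c = n := by
  simp only [children, List.mem_reverse, List.mem_filter, List.mem_range, Bool.and_eq_true,
    decide_eq_true_eq]
  omega

theorem children_nodup (p : ℕ → ℕ) (k n : ℕ) : (children p k n).Nodup :=
  List.nodup_reverse.2 (List.nodup_range.filter _)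

theorem lt_of_mem_children (hp : IsParentMap p k) {n c : ℕ} (hc : c ∈ children p k n) :
    n < c := by
  obtain ⟨h1, h2, rfl⟩ := mem_children.1 hc
  exact hp c h1 h2

theorem le_of_mem_children {n c : ℕ} (hc : c ∈ children p k n) : c ≤ k :=
  (mem_children.1 hc).2.1

theorem sub_lt_sub_of_mem_children (hp : IsParentMap p k) {n c : ℕ} (hc : c ∈ children p k n) :
    k - c < k - n := by
  have := lt_of_mem_children hp hc
  have := le_of_mem_children hc
  omega

theorem children_eq_nil_of_le (hp : IsParentMap p k) {n : ℕ} (hn : k ≤ n) :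
    children p k n = [] :=
  List.eq_nil_iff_forall_not_mem.2 fun c hc => by
    have := lt_of_mem_children hp hc
    have := le_of_mem_children hc
    omega

theorem children_succ (p : ℕ → ℕ) (k n : ℕ) :
    children p (k + 1) n = (if p (k + 1) = n then [k + 1] else []) ++ children p k n := by
  unfold children
  rw [List.range_succ, List.filter_append, List.reverse_append]
  split_ifs with h <;> simp [h]

theorem isAncestor_iff_eq_or_children (hp : IsParentMap p k) {n j : ℕ} (hj : j ≤ k) :
    isAncestor p n j ↔ j = n ∨ ∃ c ∈ children p k n, isAncestor p c j := by
  constructor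
  · intro h
    induction j using Nat.strong_induction_on with
    | _ j ih =>
      rcases eq_or_ne j 0 with rfl | hj0
      · exact Or.inl (isAncestor_zero_right_iff.1 h).symm
      rcases (isAncestor_iff_eq_or_parent hj0).1 h with rfl | h
      · exact Or.inl rfl
      have hpj := hp j (by omega) hj
      rcases ih (p j) hpj (by omega) h with hn | ⟨c, hc, hcj⟩
      · exact Or.inr ⟨j, mem_children.2 ⟨by omega, hj, hn⟩, isAncestor_refl j⟩
      · exact Or.inr ⟨c, hc, (isAncestor_iff_eq_or_parent hj0).2 (Or.inr hcj)⟩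
  · rintro (rfl | ⟨c, hc, hcj⟩)
    · exact isAncestor_refl j
    · obtain ⟨h1, -, hpc⟩ := mem_children.1 hc
      have hnc : isAncestor p n c :=
        (isAncestor_iff_eq_or_parent (by omega)).2 (Or.inr (by rw [hpc]; exact isAncestor_refl n))
      exact hnc.trans hcj

theorem eq_of_mem_children_of_isAncestor (hp : IsParentMap p k) {n c c' j : ℕ}
    (hc : c ∈ children p k n) (hc' : c' ∈ children p k n)
    (hcj : isAncestor p c j) (hc'j : isAncestor p c' j) : c = c' := by
  wlog h : isAncestor p c c' generalizing c c'
  · exact (this hc' hc hc'j hcj ((isAncestor_total hcj hc'j).resolve_left h)).symm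
  obtain ⟨h1, h2, hpc'⟩ := mem_children.1 hc'
  refine ((isAncestor_iff_eq_or_parent (by omega)).1 h).resolve_right fun hcn => ?_
  have := hp c' h1 h2
  have := hcn.le hp (by omega)
  have := lt_of_mem_children hp hc
  omega

theorem preorderAux_succ (p : ℕ → ℕ) (k fuel n : ℕ) :
    preorderAux p k (fuel + 1) n = n :: (children p k n).flatMap (preorderAux p k fuel) := rfl

/-- Labels strictly increase along every downward path from `n` and stay `≤ k`, so fuel
`k - n` reaches all descendants of `n`. -/
def subtree (p : ℕ → ℕ) (k n : ℕ) : List ℕ := preorderAux p k (k - n) n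

theorem preorderAux_fuel_congr (hp : IsParentMap p k) {f₁ f₂ n : ℕ} (h₁ : k - n ≤ f₁)
    (h₂ : k - n ≤ f₂) : preorderAux p k f₁ n = preorderAux p k f₂ n := by
  induction f₁ generalizing f₂ n with
  | zero =>
    cases f₂ with
    | zero => rfl
    | succ f₂ => rw [preorderAux_succ, children_eq_nil_of_le hp (by omega)]; rfl
  | succ f₁ ih =>
    cases f₂ with
    | zero => rw [preorderAux_succ, children_eq_nil_of_le hp (by omega)]; rfl
    | succ f₂ =>
      rw [preorderAux_succ, preorderAux_succ]
      congr 1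
      refine List.flatMap_congr fun c hc => ?_
      have := sub_lt_sub_of_mem_children hp hc
      exact ih (by omega) (by omega)

theorem subtree_eq (hp : IsParentMap p k) (n : ℕ) :
    subtree p k n = n :: (children p k n).flatMap (subtree p k) := by
  rcases Nat.eq_zero_or_pos (k - n) with h0 | hpos
  · rw [subtree, h0, children_eq_nil_of_le hp (by omega)]
    rfl
  · obtain ⟨g, hg⟩ : ∃ g, k - n = g + 1 := ⟨k - n - 1, by omega⟩
    rw [subtree, hg, preorderAux_succ]
    congr 1
    refine List.flatMap_congr fun c hc => ?_
    have := sub_lt_sub_of_mem_children hp hc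
    exact preorderAux_fuel_congr hp (by omega) le_rfl

theorem subtree_of_le {n : ℕ} (hn : k ≤ n) : subtree p k n = [n] := by
  rw [subtree, Nat.sub_eq_zero_of_le hn]
  rfl

theorem mem_subtree (hp : IsParentMap p k) {n j : ℕ} (hn : n ≤ k) :
    j ∈ subtree p k n ↔ j ≤ k ∧ isAncestor p n j := by
  have ih : ∀ c ∈ children p k n, (j ∈ subtree p k c ↔ j ≤ k ∧ isAncestor p c j) :=
    fun c hc => by
      have := sub_lt_sub_of_mem_children hp hc
      exact mem_subtree hp (le_of_mem_children hc)
  rw [subtree_eq hp, List.mem_cons, List.mem_flatMap]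
  constructor
  · rintro (rfl | ⟨c, hc, hjc⟩)
    · exact ⟨hn, isAncestor_refl j⟩
    · obtain ⟨hj, hcj⟩ := (ih c hc).1 hjc
      exact ⟨hj, (isAncestor_iff_eq_or_children hp hj).2 (Or.inr ⟨c, hc, hcj⟩)⟩
  · rintro ⟨hj, hnj⟩
    exact ((isAncestor_iff_eq_or_children hp hj).1 hnj).imp id
      fun ⟨c, hc, hcj⟩ => ⟨c, hc, (ih c hc).2 ⟨hj, hcj⟩⟩
termination_by k - n

theorem not_mem_subtree_of_lt (hp : IsParentMap p k) {n j : ℕ} (hn : n ≤ k) (hj : j < n) :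
    j ∉ subtree p k n := fun h => by
  obtain ⟨hjk, hnj⟩ := (mem_subtree hp hn).1 h
  have := hnj.le hp hjk
  omega

theorem mem_flatMap_children_subtree (hp : IsParentMap p k) {n j : ℕ} (hn : n ≤ k) :
    j ∈ (children p k n).flatMap (subtree p k) ↔ j ≤ k ∧ j ≠ n ∧ isAncestor p n j := by
  have hsub : j ∈ n :: (children p k n).flatMap (subtree p k) ↔ j ≤ k ∧ isAncestor p n j := by
    rw [← subtree_eq hp, mem_subtree hp hn]
  have hne : j ∈ (children p k n).flatMap (subtree p k) → j ≠ n := by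
    rw [List.mem_flatMap]
    rintro ⟨c, hc, hjc⟩ rfl
    exact not_mem_subtree_of_lt hp (le_of_mem_children hc) (lt_of_mem_children hp hc) hjc
  rw [List.mem_cons] at hsub
  constructor
  · intro h
    exact ⟨(hsub.1 (Or.inr h)).1, hne h, (hsub.1 (Or.inr h)).2⟩
  · rintro ⟨hj, hjn, hnj⟩
    exact (hsub.2 ⟨hj, hnj⟩).resolve_left hjn

theorem subtree_infix_of_isAncestor (hp : IsParentMap p k) {n j : ℕ} (hj : j ≤ k)
    (h : isAncestor p n j) : subtree p k j <:+: subtree p k n := by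
  rcases (isAncestor_iff_eq_or_children hp hj).1 h with rfl | ⟨c, hc, hcj⟩
  · exact List.infix_refl _
  · have := sub_lt_sub_of_mem_children hp hc
    refine (subtree_infix_of_isAncestor hp hj hcj).trans ?_
    rw [subtree_eq hp n]
    exact (List.infix_flatMap_of_mem hc _).trans (List.suffix_cons _ _).isInfix
termination_by k - n

theorem children_pairwise_disjoint_subtree (hp : IsParentMap p k) (n a : ℕ) :
    (children p k n).Pairwise fun c c' => a ∉ subtree p k c ∨ a ∉ subtree p k c' := by
  refine (children_nodup p k n).pairwise_of_forall_ne fun c hc c' hc' hne => ?_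
  rw [← not_and_or]
  rintro ⟨hac, hac'⟩
  exact hne (eq_of_mem_children_of_isAncestor hp hc hc'
    ((mem_subtree hp (le_of_mem_children hc)).1 hac).2
    ((mem_subtree hp (le_of_mem_children hc')).1 hac').2)

theorem subtree_succ (hp : IsParentMap p (k + 1)) (n : ℕ) :
    subtree p (k + 1) n = insertAfter (p (k + 1)) (k + 1) (subtree p k n) := by
  have hp' := hp.mono
  have ih : ∀ c ∈ children p k n,
      subtree p (k + 1) c = insertAfter (p (k + 1)) (k + 1) (subtree p k c) := fun c hc => by
    have := sub_lt_sub_of_mem_children hp' hc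
    exact subtree_succ hp c
  rw [subtree_eq hp, subtree_eq hp', children_succ, List.flatMap_append, List.flatMap_congr ih]
  split_ifs with h
  · have hfresh : ∀ c ∈ children p k n, p (k + 1) ∉ subtree p k c := fun c hc =>
      not_mem_subtree_of_lt hp' (le_of_mem_children hc) (h ▸ lt_of_mem_children hp' hc)
    rw [List.flatMap_congr fun c hc => insertAfter_of_not_mem (hfresh c hc),
      List.flatMap_singleton, subtree_of_le le_rfl, h]
    simp [insertAfter]
  · rw [List.flatMap_nil, List.nil_append,
      ← insertAfter_flatMap (children_pairwise_disjoint_subtree hp' n _)]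
    simp [insertAfter, Ne.symm h]
termination_by k - n

theorem buildL_eq_subtree (hp : IsParentMap p k) : buildL p k = subtree p k 0 := by
  induction k with
  | zero => rfl
  | succ k ih => rw [buildL, ih hp.mono, subtree_succ hp 0]

end Traversal

/-- Preorder-traversal characterization: the final list `L k` equals the
depth-first preorder traversal of the parent tree rooted at `0` in which the
children of each node are visited in decreasing order of timestamp; in
particular, each node is followed in `L k` by a contiguous block consisting
exactly of its proper descendants. -/
theorem preorder_characterization
    (k : ℕ) (p : ℕ → ℕ) (hp : ∀ i, 1 ≤ i → i ≤ k → p i < i) :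
    buildL p k = preorderAux p k k 0 ∧
      ∀ n, n ≤ k → ∃ u v w : List ℕ, buildL p k = u ++ n :: v ++ w ∧
        ∀ j, j ∈ v ↔ (j ≤ k ∧ j ≠ n ∧ isAncestor p n j) := by
  refine ⟨buildL_eq_subtree hp, fun n hn => ?_⟩
  obtain ⟨u, w, huw⟩ := subtree_infix_of_isAncestor hp hn (isAncestor_zero hp hn)
  refine ⟨u, (children p k n).flatMap (subtree p k), w, ?_,
    fun j => mem_flatMap_children_subtree hp hn⟩
  rw [buildL_eq_subtree hp, ← huw, subtree_eq hp n]
end
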